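/- arXiv:2504.04073 — 6 statements merged into one kernel-verified Lean document; each statement's English description precedes it below -/
import Mathlib

section
/- Let G be a connected finite simple graph on vertex set {1,…,m} (m ≥ 2) with neighbor sets N_i, maximum degree d_max, Laplacian matrix L, largest Laplacian eigenvalue λ_max and second-smallest Laplacian eigenvalue λ_min. Fix d ≥ 1, let x_1,…,x_m ∈ ℝ^d and set z_{ij} := (x_i + x_j)/2 for each adjacent pair. Then, with λ := λ_min²/(2λ_max), λ · Σ_{i=1}^m Σ_{j∈N_i} ‖x_i − z_{ij}‖² ≤ Σ_{i=1}^m ‖Σ_{j∈N_i} (x_i − z_{ij})‖² ≤ d_max · Σ_{i=1}^m Σ_{j∈N_i} ‖x_i − z_{ij}‖². -/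
open Finset Matrix

section aux
variable {m : ℕ} {L : Matrix (Fin m) (Fin m) ℝ}

local notation "⟪" x ", " y "⟫" => @inner ℝ _ _ x y

lemma inner_eigen (hL : L.IsHermitian) (y : Fin m → ℝ) (i : Fin m) :
    ⟪hL.eigenvectorBasis i, ((WithLp.equiv 2 (Fin m → ℝ)).symm (L *ᵥ y) : EuclideanSpace ℝ (Fin m))⟫
      = hL.eigenvalues i *
        ⟪hL.eigenvectorBasis i, ((WithLp.equiv 2 (Fin m → ℝ)).symm y : EuclideanSpace ℝ (Fin m))⟫ := by
  have hsym : Lᵀ = L := by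
    have := hL.eq
    rwa [conjTranspose_eq_transpose_of_trivial] at this
  simp only [PiLp.inner_apply, RCLike.inner_apply, starRingEnd_apply, star_trivial,
    WithLp.equiv_symm_apply, PiLp.toLp_apply]
  simp only [mul_comm ((L *ᵥ y) _), mul_comm (y _)]
  have h1 : ∑ k, (hL.eigenvectorBasis i) k * (L *ᵥ y) k
      = (⇑(hL.eigenvectorBasis i)) ⬝ᵥ (L *ᵥ y) := rfl
  have h2 : (⇑(hL.eigenvectorBasis i)) ⬝ᵥ (L *ᵥ y)
      = (L *ᵥ ⇑(hL.eigenvectorBasis i)) ⬝ᵥ y := by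
    rw [Matrix.dotProduct_mulVec]
    congr 1
    rw [← Matrix.mulVec_transpose, hsym]
  rw [h1, h2, hL.mulVec_eigenvectorBasis, smul_dotProduct]
  simp [dotProduct, Finset.mul_sum]

lemma q_expand (hL : L.IsHermitian) (y : Fin m → ℝ) :
    ∑ i, y i * (L *ᵥ y) i
      = ∑ i, hL.eigenvalues i *
          ⟪hL.eigenvectorBasis i, ((WithLp.equiv 2 (Fin m → ℝ)).symm y : EuclideanSpace ℝ (Fin m))⟫ ^ 2 := by
  set Y : EuclideanSpace ℝ (Fin m) := (WithLp.equiv 2 (Fin m → ℝ)).symm y with hY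
  set W : EuclideanSpace ℝ (Fin m) := (WithLp.equiv 2 (Fin m → ℝ)).symm (L *ᵥ y) with hW
  have h0 : ∑ i, y i * (L *ᵥ y) i = ⟪Y, W⟫ := by
    simp [PiLp.inner_apply, RCLike.inner_apply, hY, hW, WithLp.equiv_symm_apply, PiLp.toLp_apply, mul_comm]
  rw [h0, ← hL.eigenvectorBasis.sum_inner_mul_inner Y W]
  refine Finset.sum_congr rfl fun i _ => ?_
  rw [inner_eigen hL y i, real_inner_comm]
  ring

lemma p_expand (hL : L.IsHermitian) (y : Fin m → ℝ) :
    ∑ i, ((L *ᵥ y) i) ^ 2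
      = ∑ i, hL.eigenvalues i ^ 2 *
          ⟪hL.eigenvectorBasis i, ((WithLp.equiv 2 (Fin m → ℝ)).symm y : EuclideanSpace ℝ (Fin m))⟫ ^ 2 := by
  set Y : EuclideanSpace ℝ (Fin m) := (WithLp.equiv 2 (Fin m → ℝ)).symm y with hY
  set W : EuclideanSpace ℝ (Fin m) := (WithLp.equiv 2 (Fin m → ℝ)).symm (L *ᵥ y) with hW
  have h0 : ∑ i, ((L *ᵥ y) i) ^ 2 = ⟪W, W⟫ := by
    simp only [PiLp.inner_apply, RCLike.inner_apply, hW, WithLp.equiv_symm_apply, PiLp.toLp_apply, sq, conj_trivial]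
  rw [h0, ← hL.eigenvectorBasis.sum_inner_mul_inner W W]
  refine Finset.sum_congr rfl fun i _ => ?_
  rw [real_inner_comm, inner_eigen hL y i]
  ring

lemma key_lower (hL : L.IsHermitian) (c : ℝ)
    (h : ∀ i, c * hL.eigenvalues i ≤ hL.eigenvalues i ^ 2) (y : Fin m → ℝ) :
    c * ∑ i, y i * (L *ᵥ y) i ≤ ∑ i, ((L *ᵥ y) i) ^ 2 := by
  rw [q_expand hL y, p_expand hL y, Finset.mul_sum]
  refine Finset.sum_le_sum fun i _ => ?_
  rw [← mul_assoc]
  exact mul_le_mul_of_nonneg_right (h i) (sq_nonneg _)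

lemma rayleigh_upper (hL : L.IsHermitian) (c : ℝ)
    (h : ∀ i, hL.eigenvalues i ≤ c) (y : Fin m → ℝ) :
    ∑ i, y i * (L *ᵥ y) i ≤ c * ∑ i, (y i) ^ 2 := by
  have h0 : ∑ i, (y i) ^ 2
      = ∑ i, ⟪hL.eigenvectorBasis i, ((WithLp.equiv 2 (Fin m → ℝ)).symm y : EuclideanSpace ℝ (Fin m))⟫ ^ 2 := by
    set Y : EuclideanSpace ℝ (Fin m) := (WithLp.equiv 2 (Fin m → ℝ)).symm y with hY
    have h1 : ∑ i, (y i) ^ 2 = ⟪Y, Y⟫ := by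
      simp only [PiLp.inner_apply, RCLike.inner_apply, hY, WithLp.equiv_symm_apply, PiLp.toLp_apply, sq, conj_trivial]
    rw [h1, ← hL.eigenvectorBasis.sum_inner_mul_inner Y Y]
    exact Finset.sum_congr rfl fun i _ => by rw [real_inner_comm]; ring
  rw [q_expand hL y, h0, Finset.mul_sum]
  refine Finset.sum_le_sum fun i _ => ?_
  exact mul_le_mul_of_nonneg_right (h i) (sq_nonneg _)

lemma eucl_sum_apply {d : ℕ} {κ : Type*} (s : Finset κ) (f : κ → EuclideanSpace ℝ (Fin d)) (t : Fin d) :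
    (∑ j ∈ s, f j) t = ∑ j ∈ s, f j t := by
  induction s using Finset.cons_induction with
  | empty => rfl
  | cons a s ha ih => rw [Finset.sum_cons, Finset.sum_cons, ← ih]; rfl

lemma eucl_norm_sq {d : ℕ} (v : EuclideanSpace ℝ (Fin d)) : ‖v‖ ^ 2 = ∑ t, (v t) ^ 2 := by
  rw [PiLp.norm_sq_eq_of_L2]
  exact Finset.sum_congr rfl fun t _ => by rw [Real.norm_eq_abs, sq_abs]

end aux

/-- Lemma 1 of the paper: with `z_{ij} = (x_i + x_j)/2` and `λ = λ_min²/(2 λ_max)`,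
`λ · Σᵢ Σ_{j∈Nᵢ} ‖xᵢ − z_{ij}‖² ≤ Σᵢ ‖Σ_{j∈Nᵢ} (xᵢ − z_{ij})‖²
  ≤ d_max · Σᵢ Σ_{j∈Nᵢ} ‖xᵢ − z_{ij}‖²`. -/
theorem stmt_1 (m d : ℕ) (hm : 2 ≤ m) (hd : 1 ≤ d)
    (G : SimpleGraph (Fin m)) [DecidableRel G.Adj] (hG : G.Connected)
    (hL : (G.lapMatrix ℝ).IsHermitian)
    (σ : Equiv.Perm (Fin m))
    (hσ : Monotone fun i => hL.eigenvalues (σ i))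
    (lmax lmin : ℝ)
    (hmax : lmax = hL.eigenvalues (σ ⟨m - 1, by omega⟩))
    (hmin : lmin = hL.eigenvalues (σ ⟨1, by omega⟩))
    (x : Fin m → EuclideanSpace ℝ (Fin d))
    (z : Fin m → Fin m → EuclideanSpace ℝ (Fin d))
    (hz : ∀ i j, G.Adj i j → z i j = (1 / 2 : ℝ) • (x i + x j))
    (lam : ℝ) (hlam : lam = lmin ^ 2 / (2 * lmax)) :
    lam * (∑ i, ∑ j ∈ G.neighborFinset i, ‖x i - z i j‖ ^ 2)
      ≤ ∑ i, ‖∑ j ∈ G.neighborFinset i, (x i - z i j)‖ ^ 2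
    ∧ ∑ i, ‖∑ j ∈ G.neighborFinset i, (x i - z i j)‖ ^ 2
      ≤ (G.maxDegree : ℝ) * ∑ i, ∑ j ∈ G.neighborFinset i, ‖x i - z i j‖ ^ 2 := by
  classical
  set L : Matrix (Fin m) (Fin m) ℝ := G.lapMatrix ℝ with hLdef
  -- rewrite z in terms of x
  have hzz : ∀ i, ∀ j ∈ G.neighborFinset i, x i - z i j = (1/2 : ℝ) • (x i - x j) := by
    intro i j hj
    rw [hz i j ((G.mem_neighborFinset i j).mp hj)]
    module
  set y : Fin d → Fin m → ℝ := fun t i => x i t with hy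
  set q : Fin d → ℝ := fun t => ∑ i, y t i * (L *ᵥ y t) i with hq
  set P : Fin d → ℝ := fun t => ∑ i, ((L *ᵥ y t) i) ^ 2 with hP
  -- coordinates of the neighbor sums
  have hcoord : ∀ t i, (∑ j ∈ G.neighborFinset i, (x i - x j)) t = (L *ᵥ y t) i := by
    intro t i
    rw [eucl_sum_apply, SimpleGraph.lapMatrix_mulVec_apply]
    simp only [PiLp.sub_apply, Finset.sum_sub_distrib, Finset.sum_const, nsmul_eq_mul]
    rfl
  -- middle quantity
  have hM : ∑ i, ‖∑ j ∈ G.neighborFinset i, (x i - z i j)‖ ^ 2 = (1/4) * ∑ t, P t := by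
    have h1 : ∀ i, ∑ j ∈ G.neighborFinset i, (x i - z i j)
        = (1/2 : ℝ) • ∑ j ∈ G.neighborFinset i, (x i - x j) := by
      intro i
      rw [Finset.sum_congr rfl (hzz i), Finset.smul_sum]
    calc ∑ i, ‖∑ j ∈ G.neighborFinset i, (x i - z i j)‖ ^ 2
        = ∑ i, (1/4) * ‖∑ j ∈ G.neighborFinset i, (x i - x j)‖ ^ 2 := by
          refine Finset.sum_congr rfl fun i _ => ?_
          rw [h1 i, norm_smul, Real.norm_eq_abs,
            abs_of_nonneg (by norm_num : (0:ℝ) ≤ 1/2)]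
          ring
      _ = (1/4) * ∑ i, ∑ t, ((L *ᵥ y t) i) ^ 2 := by
          rw [← Finset.mul_sum]
          congr 1
          refine Finset.sum_congr rfl fun i _ => ?_
          rw [eucl_norm_sq]
          exact Finset.sum_congr rfl fun t _ => by rw [hcoord t i]
      _ = (1/4) * ∑ t, P t := by rw [Finset.sum_comm]
  -- the constraint violation
  have hneigh : ∀ i : Fin m, G.neighborFinset i = Finset.univ.filter (fun j => G.Adj i j) := by
    intro i; ext j; simp
  have hqt : ∀ t, ∑ i, ∑ j ∈ G.neighborFinset i, (y t i - y t j) ^ 2 = 2 * q t := by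
    intro t
    have h2 : q t = (∑ i, ∑ j, if G.Adj i j then (y t i - y t j) ^ 2 else 0) / 2 := by
      have e : ∑ i, y t i * (L *ᵥ y t) i = Matrix.toLinearMap₂' ℝ L (y t) (y t) := by
        rw [Matrix.toLinearMap₂'_apply']; rfl
      calc q t = ∑ i, y t i * (L *ᵥ y t) i := rfl
        _ = _ := by rw [e, hLdef, SimpleGraph.lapMatrix_toLinearMap₂']
    rw [h2, show (2:ℝ) * ((∑ i, ∑ j, if G.Adj i j then (y t i - y t j) ^ 2 else 0) / 2)
        = ∑ i, ∑ j, if G.Adj i j then (y t i - y t j) ^ 2 else 0 from by ring]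
    refine Finset.sum_congr rfl fun i _ => ?_
    rw [hneigh i, Finset.sum_filter]
  have hS : ∑ i, ∑ j ∈ G.neighborFinset i, ‖x i - z i j‖ ^ 2 = (1/4) * ∑ t, 2 * q t := by
    calc ∑ i, ∑ j ∈ G.neighborFinset i, ‖x i - z i j‖ ^ 2
        = ∑ i, ∑ j ∈ G.neighborFinset i, (1/4) * ∑ t, (y t i - y t j) ^ 2 := by
          refine Finset.sum_congr rfl fun i _ => Finset.sum_congr rfl fun j hj => ?_
          rw [hzz i j hj, norm_smul, Real.norm_eq_abs,
            abs_of_nonneg (by norm_num : (0:ℝ) ≤ 1/2), mul_pow, eucl_norm_sq,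
            Finset.mul_sum, Finset.mul_sum]
          refine Finset.sum_congr rfl fun t _ => ?_
          rw [PiLp.sub_apply]
          show (1/2:ℝ) ^ 2 * (y t i - y t j) ^ 2 = 1/4 * (y t i - y t j) ^ 2
          norm_num
      _ = (1/4) * ∑ t, ∑ i, ∑ j ∈ G.neighborFinset i, (y t i - y t j) ^ 2 := by
          have hswap : ∀ i : Fin m, ∑ j ∈ G.neighborFinset i, (1/4 : ℝ) * ∑ t, (y t i - y t j) ^ 2
              = (1/4 : ℝ) * ∑ t, ∑ j ∈ G.neighborFinset i, (y t i - y t j) ^ 2 := by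
            intro i
            rw [← Finset.mul_sum, Finset.sum_comm]
          rw [Finset.sum_congr rfl fun i _ => hswap i, ← Finset.mul_sum, Finset.sum_comm]
      _ = (1/4) * ∑ t, 2 * q t := by
          congr 1
          exact Finset.sum_congr rfl fun t _ => hqt t
  -- eigenvalue facts
  have hPSD : (G.lapMatrix ℝ).PosSemidef := SimpleGraph.posSemidef_lapMatrix ℝ G
  have hnonneg : ∀ k, 0 ≤ hL.eigenvalues k := fun k => hPSD.eigenvalues_nonneg k
  have hdet : L.det = 0 := by
    rw [← Matrix.exists_mulVec_eq_zero_iff]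
    refine ⟨fun _ => 1, ?_, G.lapMatrix_mulVec_const_eq_zero⟩
    intro h
    exact one_ne_zero (congrFun h ⟨0, by omega⟩)
  have hzero : ∃ k, hL.eigenvalues k = 0 := by
    have := hL.det_eq_prod_eigenvalues
    rw [hdet] at this
    obtain ⟨k, _, hk⟩ := Finset.prod_eq_zero_iff.mp this.symm
    exact ⟨k, hk⟩
  have hσ0 : hL.eigenvalues (σ ⟨0, by omega⟩) = 0 := by
    obtain ⟨k, hk⟩ := hzero
    refine le_antisymm ?_ (hnonneg _)
    have h1 : (⟨0, by omega⟩ : Fin m) ≤ σ.symm k := by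
      rw [Fin.le_def]; exact Nat.zero_le _
    have := hσ h1
    simpa [Equiv.apply_symm_apply, hk] using this
  have hminpos : 0 ≤ lmin := by
    rw [hmin, ← hσ0]
    exact hσ (show (⟨0, by omega⟩ : Fin m) ≤ ⟨1, by omega⟩ by rw [Fin.mk_le_mk]; omega)
  have hle_max : ∀ k, hL.eigenvalues k ≤ lmax := by
    intro k
    rw [hmax]
    have h1 : σ.symm k ≤ (⟨m - 1, by omega⟩ : Fin m) := by
      rw [Fin.le_def]
      show (σ.symm k).val ≤ m - 1
      have := (σ.symm k).isLt
      omega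
    have := hσ h1
    simpa [Equiv.apply_symm_apply] using this
  -- lmax is positive
  obtain ⟨a, b, hab⟩ : ∃ a b, G.Adj a b := by
    have hne : (⟨0, by omega⟩ : Fin m) ≠ (⟨1, by omega⟩ : Fin m) := by
      simp [Fin.ext_iff]
    obtain ⟨w⟩ := hG.preconnected ⟨0, by omega⟩ ⟨1, by omega⟩
    cases w with
    | cons h _ => exact ⟨_, _, h⟩
  have hlmaxpos : 0 < lmax := by
    set y0 : Fin m → ℝ := Pi.single a 1 with hy0
    have hq0 : (1/2 : ℝ) ≤ ∑ i, y0 i * (L *ᵥ y0) i := by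
      have h2 : ∑ i, y0 i * (L *ᵥ y0) i = Matrix.toLinearMap₂' ℝ L y0 y0 := by
        rw [Matrix.toLinearMap₂'_apply']; rfl
      rw [h2, hLdef, SimpleGraph.lapMatrix_toLinearMap₂']
      have hFnn : ∀ i j : Fin m, (0:ℝ) ≤ if G.Adj i j then (y0 i - y0 j) ^ 2 else 0 := by
        intro i j; split_ifs
        exacts [sq_nonneg _, le_rfl]
      have hterm : (1 : ℝ) ≤ ∑ i, ∑ j, if G.Adj i j then (y0 i - y0 j) ^ 2 else 0 := by
        have hb : (if G.Adj a b then (y0 a - y0 b) ^ 2 else 0) = 1 := by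
          rw [if_pos hab, hy0]
          have hne := G.ne_of_adj hab
          simp [Pi.single_apply, hne.symm, Ne.symm hne]
        have hinner : (1 : ℝ) ≤ ∑ j, if G.Adj a j then (y0 a - y0 j) ^ 2 else 0 := by
          rw [← hb]
          exact Finset.single_le_sum (fun j _ => hFnn a j) (Finset.mem_univ b)
        calc (1 : ℝ) ≤ ∑ j, if G.Adj a j then (y0 a - y0 j) ^ 2 else 0 := hinner
          _ ≤ ∑ i, ∑ j, if G.Adj i j then (y0 i - y0 j) ^ 2 else 0 :=
            Finset.single_le_sum (fun i _ => Finset.sum_nonneg fun j _ => hFnn i j)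
              (Finset.mem_univ a)
      linarith
    have hray := rayleigh_upper hL lmax hle_max y0
    have hy0sq : ∑ i, (y0 i)^2 = 1 := by
      rw [hy0]
      simp [Pi.single_apply]
    rw [hy0sq, mul_one] at hray
    linarith
  have hlmax_ne : lmax ≠ 0 := ne_of_gt hlmaxpos
  have h2lam : lmin ^ 2 / lmax = 2 * lam := by
    rw [hlam]; field_simp
  have heig : ∀ k, (lmin ^ 2 / lmax) * hL.eigenvalues k ≤ hL.eigenvalues k ^ 2 := by
    intro k
    by_cases hk : σ.symm k = (⟨0, by omega⟩ : Fin m)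
    · have : hL.eigenvalues k = 0 := by
        rw [← Equiv.apply_symm_apply σ k, hk, hσ0]
      rw [this]; simp
    · have h1 : (⟨1, by omega⟩ : Fin m) ≤ σ.symm k := by
        rw [Fin.le_def]
        show 1 ≤ (σ.symm k).val
        have h0 : (σ.symm k).val ≠ 0 := fun h => hk (Fin.ext (by simpa using h))
        omega
      have hlmin_le : lmin ≤ hL.eigenvalues k := by
        rw [hmin]
        have := hσ h1
        simpa [Equiv.apply_symm_apply] using this
      rw [div_mul_eq_mul_div, div_le_iff₀ hlmaxpos]
      have hμ0 : 0 ≤ hL.eigenvalues k := hnonneg k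
      nlinarith [hle_max k, hlmin_le, hminpos, mul_le_mul_of_nonneg_left (hle_max k)
        (mul_nonneg hμ0 hμ0), mul_le_mul_of_nonneg_right
        (mul_self_le_mul_self hminpos hlmin_le) hμ0]
  -- lower bound
  have hlow : ∀ t, 2 * lam * q t ≤ P t := by
    intro t
    have := key_lower hL (lmin ^ 2 / lmax) heig (y t)
    rwa [h2lam] at this
  constructor
  · rw [hS, hM]
    have e1 : ∑ t, (2:ℝ) * q t = 2 * ∑ t, q t := by rw [Finset.mul_sum]
    have e2 : ∑ t, (2:ℝ) * lam * q t = 2 * lam * ∑ t, q t := by rw [Finset.mul_sum]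
    have h1 : lam * ((1/4) * ∑ t, 2 * q t) = (1/4) * ∑ t, 2 * lam * q t := by
      rw [e1, e2]; ring
    rw [h1]
    exact mul_le_mul_of_nonneg_left (Finset.sum_le_sum fun t _ => hlow t) (by norm_num)
  · -- upper bound
    rw [Finset.mul_sum]
    have hstep : ∀ i : Fin m, ‖∑ j ∈ G.neighborFinset i, (x i - z i j)‖ ^ 2
        ≤ (G.maxDegree : ℝ) * ∑ j ∈ G.neighborFinset i, ‖x i - z i j‖ ^ 2 := by
      intro i
      have h1 : ‖∑ j ∈ G.neighborFinset i, (x i - z i j)‖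
          ≤ ∑ j ∈ G.neighborFinset i, ‖x i - z i j‖ := norm_sum_le _ _
      have h2 : (∑ j ∈ G.neighborFinset i, ‖x i - z i j‖) ^ 2
          ≤ (G.neighborFinset i).card * ∑ j ∈ G.neighborFinset i, ‖x i - z i j‖ ^ 2 :=
        sq_sum_le_card_mul_sum_sq
      have h3 : ((G.neighborFinset i).card : ℝ) ≤ (G.maxDegree : ℝ) := by
        exact_mod_cast G.degree_le_maxDegree i
      have h4 : (0:ℝ) ≤ ∑ j ∈ G.neighborFinset i, ‖x i - z i j‖ ^ 2 :=
        Finset.sum_nonneg fun j _ => sq_nonneg _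
      calc ‖∑ j ∈ G.neighborFinset i, (x i - z i j)‖ ^ 2
          ≤ (∑ j ∈ G.neighborFinset i, ‖x i - z i j‖) ^ 2 :=
            pow_le_pow_left₀ (norm_nonneg _) h1 2
        _ ≤ (G.neighborFinset i).card * ∑ j ∈ G.neighborFinset i, ‖x i - z i j‖ ^ 2 := h2
        _ ≤ (G.maxDegree : ℝ) * ∑ j ∈ G.neighborFinset i, ‖x i - z i j‖ ^ 2 :=
            mul_le_mul_of_nonneg_right h3 h4
    exact Finset.sum_le_sum fun i _ => hstep i
end

section
/- Let f : ℝ^d → ℝ be differentiable with L-Lipschitz gradient, let N_i be a finite index set with d_i = |N_i|, let y_{ij,i}, z_{ij} ∈ ℝ^d for j ∈ N_i, and μ_z > 0. Define the local Lagrangian ℒ_i(u) := f(u) + Σ_{j∈N_i} (⟨y_{ij,i}, u − z_{ij}⟩ + (μ_z/2)‖u − z_{ij}‖²), and for points x̂, x ∈ ℝ^d set ê := ∇ℒ_i(x̂) = ∇f(x̂) + Σ_{j∈N_i}(y_{ij,i} + μ_z(x̂ − z_{ij})). Then ℒ_i(x̂) − ℒ_i(x) ≤ ‖ê‖² + (1/4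 + L/2 − μ_z d_i/2) ‖x̂ − x‖². -/
open Finset RealInnerProductSpace

private lemma descent_lemma {d : ℕ} (f : EuclideanSpace ℝ (Fin d) → ℝ)
    (hf : Differentiable ℝ f) (L : ℝ)
    (hlip : ∀ a b, ‖gradient f a - gradient f b‖ ≤ L * ‖a - b‖)
    (a b : EuclideanSpace ℝ (Fin d)) :
    f b - f a ≤ ⟪gradient f b, b - a⟫ + L / 2 * ‖b - a‖ ^ 2 := by
  set h : EuclideanSpace ℝ (Fin d) := b - a with hh
  set C : ℝ := ⟪gradient f b, h⟫ with hC
  set K : ℝ := L * ‖h‖ ^ 2 with hK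
  set φ : ℝ → ℝ := fun t => f (a + t • h) - t * C - K * (t - t ^ 2 / 2) with hφ
  have hline : ∀ t : ℝ, HasDerivAt (fun s : ℝ => a + s • h) h t := by
    intro t
    simpa using ((hasDerivAt_id t).smul_const h).const_add a
  have hF : ∀ t : ℝ, HasDerivAt (fun s : ℝ => f (a + s • h))
      ⟪gradient f (a + t • h), h⟫ t := by
    intro t
    have hg := (hf (a + t • h)).hasGradientAt
    rw [hasGradientAt_iff_hasFDerivAt] at hg
    have := hg.comp_hasDerivAt t (hline t)
    simpa [Function.comp_def] using this
  have hφ' : ∀ t : ℝ, HasDerivAt φ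
      (⟪gradient f (a + t • h), h⟫ - C - K * (1 - t)) t := by
    intro t
    have h1 : HasDerivAt (fun t : ℝ => t * C) C t := by
      simpa using (hasDerivAt_id t).mul_const C
    have h2 : HasDerivAt (fun t : ℝ => K * (t - t ^ 2 / 2)) (K * (1 - t)) t := by
      have : HasDerivAt (fun t : ℝ => t - t ^ 2 / 2) (1 - t) t := by
        have := (hasDerivAt_id t).sub ((hasDerivAt_pow 2 t).div_const 2)
        simpa [mul_comm, Pi.sub_def] using this
      simpa using this.const_mul K
    exact ((hF t).sub h1).sub h2
  have hderiv_le : ∀ t ∈ Set.Ioo (0:ℝ) 1, deriv φ t ≤ 0 := by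
    intro t ht
    rw [(hφ' t).deriv]
    have hsub : a + t • h - b = (t - 1) • h := by
      rw [hh]
      module
    have hib : ⟪gradient f (a + t • h), h⟫ - C
        = ⟪gradient f (a + t • h) - gradient f b, h⟫ := by
      rw [hC, inner_sub_left]
    have hle : ⟪gradient f (a + t • h) - gradient f b, h⟫
        ≤ L * ((1 - t) * ‖h‖) * ‖h‖ := by
      refine le_trans (real_inner_le_norm _ _) ?_
      gcongr
      calc ‖gradient f (a + t • h) - gradient f b‖ ≤ L * ‖a + t • h - b‖ :=
            hlip _ _
        _ = L * ((1 - t) * ‖h‖) := by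
            rw [hsub, norm_smul]
            have : |t - 1| = 1 - t := by
              rw [abs_of_nonpos (by linarith [ht.2])]; ring
            simp [this, Real.norm_eq_abs]
    rw [hib, hK]
    have : L * ((1 - t) * ‖h‖) * ‖h‖ = L * ‖h‖ ^ 2 * (1 - t) := by ring
    linarith
  have hcont : ContinuousOn φ (Set.Icc (0:ℝ) 1) :=
    (fun t _ => ((hφ' t).differentiableAt.continuousAt.continuousWithinAt))
  have hdiff : DifferentiableOn ℝ φ (interior (Set.Icc (0:ℝ) 1)) :=
    fun t _ => ((hφ' t).differentiableAt.differentiableWithinAt)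
  have hanti : AntitoneOn φ (Set.Icc (0:ℝ) 1) := by
    apply antitoneOn_of_deriv_nonpos (convex_Icc 0 1) hcont hdiff
    intro t ht
    rw [interior_Icc] at ht
    exact hderiv_le t ht
  have h01 : φ 1 ≤ φ 0 := hanti (by norm_num) (by norm_num) (by norm_num)
  have e1 : φ 1 = f b - C - K / 2 := by
    simp only [hφ, one_smul]
    have : a + h = b := by rw [hh]; abel
    rw [this]; ring
  have e0 : φ 0 = f a := by simp [hφ]
  rw [e1, e0] at h01
  have : f b - f a ≤ C + K / 2 := by linarith
  calc f b - f a ≤ C + K / 2 := this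
    _ = ⟪gradient f b, b - a⟫ + L / 2 * ‖b - a‖ ^ 2 := by rw [hC, hK, hh]; ring

/-- One-step descent estimate for the local augmented Lagrangian:
`ℒᵢ(x̂) − ℒᵢ(x) ≤ ‖ê‖² + (1/4 + L/2 − μ_z dᵢ/2)‖x̂ − x‖²` where
`ê = ∇ℒᵢ(x̂)` and `dᵢ = |Nᵢ|`. -/
theorem stmt_9 (d : ℕ) {ι : Type*} (N : Finset ι)
    (f : EuclideanSpace ℝ (Fin d) → ℝ) (hf : Differentiable ℝ f)
    (L : ℝ) (hL : 0 ≤ L)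
    (hlip : ∀ a b, ‖gradient f a - gradient f b‖ ≤ L * ‖a - b‖)
    (μz : ℝ) (hμz : 0 < μz)
    (y z : ι → EuclideanSpace ℝ (Fin d))
    (Li : EuclideanSpace ℝ (Fin d) → ℝ)
    (hLi : ∀ u, Li u = f u + ∑ j ∈ N, (⟪y j, u - z j⟫ + (μz / 2) * ‖u - z j‖ ^ 2))
    (xhat x ehat : EuclideanSpace ℝ (Fin d))
    (hehat : ehat = gradient f xhat + ∑ j ∈ N, (y j + μz • (xhat - z j))) :
    Li xhat - Li x
      ≤ ‖ehat‖ ^ 2 + (1 / 4 + L / 2 - μz * (N.card : ℝ) / 2) * ‖xhat - x‖ ^ 2 := by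
  set h : EuclideanSpace ℝ (Fin d) := xhat - x with hh
  have hterm : ∀ j ∈ N,
      (⟪y j, xhat - z j⟫ + (μz / 2) * ‖xhat - z j‖ ^ 2)
        - (⟪y j, x - z j⟫ + (μz / 2) * ‖x - z j‖ ^ 2)
      = ⟪y j + μz • (xhat - z j), h⟫ - μz / 2 * ‖h‖ ^ 2 := by
    intro j _
    have e1 : ⟪y j, xhat - z j⟫ - ⟪y j, x - z j⟫ = ⟪y j, h⟫ := by
      rw [← inner_sub_right]
      congr 1
      rw [hh]; abel
    have e2 : ‖x - z j‖ ^ 2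
        = ‖xhat - z j‖ ^ 2 - 2 * ⟪xhat - z j, h⟫ + ‖h‖ ^ 2 := by
      have : x - z j = (xhat - z j) - h := by rw [hh]; abel
      rw [this, norm_sub_sq_real]
    have e3 : ⟪y j + μz • (xhat - z j), h⟫
        = ⟪y j, h⟫ + μz * ⟪xhat - z j, h⟫ := by
      rw [inner_add_left, real_inner_smul_left]
    rw [e3]
    linear_combination e1 - μz / 2 * e2
  have hsum : (∑ j ∈ N, (⟪y j, xhat - z j⟫ + (μz / 2) * ‖xhat - z j‖ ^ 2))
      - (∑ j ∈ N, (⟪y j, x - z j⟫ + (μz / 2) * ‖x - z j‖ ^ 2))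
      = ⟪∑ j ∈ N, (y j + μz • (xhat - z j)), h⟫
        - (N.card : ℝ) * (μz / 2 * ‖h‖ ^ 2) := by
    rw [← Finset.sum_sub_distrib, Finset.sum_congr rfl hterm,
      Finset.sum_sub_distrib, sum_inner, Finset.sum_const, nsmul_eq_mul]
  have hdes := descent_lemma f hf L hlip x xhat
  have hinner : ⟪ehat, h⟫ = ⟪gradient f xhat, h⟫
      + ⟪∑ j ∈ N, (y j + μz • (xhat - z j)), h⟫ := by
    rw [hehat, inner_add_left]
  have hcs : ⟪ehat, h⟫ ≤ ‖ehat‖ * ‖h‖ := real_inner_le_norm _ _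
  have hyoung : ‖ehat‖ * ‖h‖ ≤ ‖ehat‖ ^ 2 + ‖h‖ ^ 2 / 4 := by
    nlinarith [sq_nonneg (‖ehat‖ - ‖h‖ / 2)]
  have key : Li xhat - Li x
      = (f xhat - f x) + (⟪∑ j ∈ N, (y j + μz • (xhat - z j)), h⟫
        - (N.card : ℝ) * (μz / 2 * ‖h‖ ^ 2)) := by
    rw [hLi, hLi, ← hsum]; ring
  rw [key]
  have hhx : xhat - x = h := hh.symm
  rw [hhx] at hdes
  nlinarith [hdes, hcs, hyoung, hinner]
end

section
/- Let G be a finite simple graph on vertex set {1,…,m} in which every vertex has degree d_i ≥ 1, let each f_i : ℝ^d → ℝ be differentiable with L-Lipschitz gradient, and let μ_z > 0, μ_y > 0. Suppose (x^t, z^t, y^t) and (x^{t+1}, z^{t+1}, y^{t+1}) satisfy: x^{t+1} is arbitrary, z_{ij}^{t+1} = ½(x_i^{t+1} + x_j^{t+1} + (y_{ij,i}^t + y_{ij,j}^t)/μ_z) for every edge, and y_{ij,i}^{t+1} = y_{ij,i}^t + μ_y(x_i^{t+1} − z_{ij}^{t+1}) for every ordered adjacent pair. Let ℒ denote the augmented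 Lagrangian and set ê_i^{t+1} := ∇f_i(x_i^{t+1}) + Σ_{j∈N_i}(y_{ij,i}^t + μ_z(x_i^{t+1} − z_{ij}^t)). Then ℒ(x^{t+1}, z^{t+1}, y^{t+1}) − ℒ(x^t, z^t, y^t) ≤ μ_y Σ_i Σ_{j∈N_i} ‖x_i^{t+1} − z_{ij}^{t+1}‖² − μ_z Σ_{{i,j}∈E} ‖z_{ij}^{t+1} − z_{ij}^t‖² + Σ_i ‖ê_i^{t+1}‖² − (μ_z/2 − 1/4 − L/2) Σ_i ‖x_i^{t+1} − x_i^t‖². -/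
open Finset RealInnerProductSpace

section Aux

variable {V : Type*} [Fintype V] [DecidableEq V] (G : SimpleGraph V) [DecidableRel G.Adj]

lemma admm_sum_darts_eq_nbr (F : V → V → ℝ) :
    ∑ d : G.Dart, F d.fst d.snd = ∑ i, ∑ j ∈ G.neighborFinset i, F i j := by
  rw [← Equiv.sum_comp
    (⟨fun s => ⟨(s.1, s.2), s.2.2⟩, fun d => ⟨d.fst, d.snd, d.adj⟩,
      fun s => by ext <;> simp, fun d => by ext <;> simp⟩ :
        (Σ v : V, G.neighborSet v) ≃ G.Dart) (fun d : G.Dart => F d.fst d.snd)]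
  rw [← Finset.univ_sigma_univ, Finset.sum_sigma]
  refine Finset.sum_congr rfl fun i _ => ?_
  simp only [Equiv.coe_fn_mk]
  rw [SimpleGraph.neighborFinset_def, Finset.sum_set_coe (f := fun j => F i j)]

lemma admm_sum_darts_eq_edge (F : V → V → ℝ) :
    ∑ d : G.Dart, F d.fst d.snd
      = ∑ e ∈ G.edgeFinset,
          Sym2.lift ⟨fun i j => F i j + F j i, fun i j => by dsimp only; ring⟩ e := by
  have hmap : ∀ d : G.Dart, d ∈ (univ : Finset G.Dart) → d.edge ∈ G.edgeFinset :=
    fun d _ => by rw [SimpleGraph.mem_edgeFinset]; exact d.edge_mem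
  rw [← Finset.sum_fiberwise_of_maps_to hmap (fun d => F d.fst d.snd)]
  refine Finset.sum_congr rfl fun e he => ?_
  rw [SimpleGraph.mem_edgeFinset] at he
  induction e with
  | _ v w =>
    have hd : Finset.filter (fun d : G.Dart => d.edge = s(v, w)) Finset.univ
        = {(⟨(v, w), he⟩ : G.Dart), (⟨(v, w), he⟩ : G.Dart).symm} := by
      have := SimpleGraph.Dart.edge_fiber (⟨(v, w), he⟩ : G.Dart)
      exact this
    have hne : (⟨(v, w), he⟩ : G.Dart) ∉ ({(⟨(v, w), he⟩ : G.Dart).symm} : Finset G.Dart) := by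
      simp only [Finset.mem_singleton, SimpleGraph.Dart.ext_iff, Prod.ext_iff]
      intro h
      exact G.ne_of_adj he h.1
    rw [hd, Finset.sum_insert hne, Finset.sum_singleton]
    simp [SimpleGraph.Dart.symm]

lemma admm_nbr_eq_edge (F : V → V → ℝ) :
    ∑ i, ∑ j ∈ G.neighborFinset i, F i j
      = ∑ e ∈ G.edgeFinset,
          Sym2.lift ⟨fun i j => F i j + F j i, fun i j => by dsimp only; ring⟩ e := by
  rw [← admm_sum_darts_eq_nbr, admm_sum_darts_eq_edge]

end Aux

section Analysis

variable {F : Type*} [NormedAddCommGroup F] [InnerProductSpace ℝ F]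

lemma admm_descent [CompleteSpace F]
    (f : F → ℝ) (hf : Differentiable ℝ f) (L : ℝ)
    (hlip : ∀ a b, ‖gradient f a - gradient f b‖ ≤ L * ‖a - b‖) (a b : F) :
    f b - f a ≤ ⟪gradient f b, b - a⟫ + L / 2 * ‖b - a‖ ^ 2 := by
  set v := b - a with hv
  have hc : ∀ t : ℝ, HasDerivAt (fun t : ℝ => a + t • v) v t := by
    intro t
    simpa using ((hasDerivAt_id t).smul_const v).const_add a
  have hg : ∀ t : ℝ, HasDerivAt (fun t : ℝ => f (a + t • v))
      ⟪gradient f (a + t • v), v⟫ t := by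
    intro t
    have h1 := (hf (a + t • v)).hasGradientAt.hasFDerivAt
    have h2 := h1.comp_hasDerivAt t (hc t)
    simp at h2 ⊢
    exact h2
  set φ : ℝ → ℝ := fun t => f (a + t • v) - t * ⟪gradient f b, v⟫
      + L / 2 * (1 - t) ^ 2 * ‖v‖ ^ 2 with hφ
  have hφd : ∀ t : ℝ, HasDerivAt φ
      (⟪gradient f (a + t • v), v⟫ - ⟪gradient f b, v⟫ - L * (1 - t) * ‖v‖ ^ 2) t := by
    intro t
    have h2 : HasDerivAt (fun t : ℝ => t * ⟪gradient f b, v⟫) ⟪gradient f b, v⟫ t := by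
      simpa using (hasDerivAt_id t).mul_const _
    have h3 : HasDerivAt (fun t : ℝ => L / 2 * (1 - t) ^ 2 * ‖v‖ ^ 2)
        (-(L * (1 - t) * ‖v‖ ^ 2)) t := by
      have : HasDerivAt (fun t : ℝ => (1 - t) ^ 2) (2 * (1 - t) * (-1)) t := by
        exact (((hasDerivAt_id t).const_sub 1)).pow 2 |>.congr_deriv (by simp [id])
      simpa using ((this.const_mul (L / 2)).mul_const (‖v‖ ^ 2)).congr_deriv (by ring)
    have := ((hg t).sub h2).add h3
    exact this.congr_deriv (by ring)
  have hmono : AntitoneOn φ (Set.Icc (0:ℝ) 1) := by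
    apply antitoneOn_of_deriv_nonpos (convex_Icc 0 1)
    · exact (Differentiable.continuous fun t => (hφd t).differentiableAt).continuousOn
    · exact fun t _ => (hφd t).differentiableAt.differentiableWithinAt
    · intro t ht
      rw [interior_Icc] at ht
      rw [(hφd t).deriv]
      have h1 : ⟪gradient f (a + t • v) - gradient f b, v⟫ ≤ L * (1 - t) * ‖v‖ ^ 2 := by
        calc ⟪gradient f (a + t • v) - gradient f b, v⟫
            ≤ ‖gradient f (a + t • v) - gradient f b‖ * ‖v‖ := real_inner_le_norm _ _
          _ ≤ (L * ‖(a + t • v) - b‖) * ‖v‖ :=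
              mul_le_mul_of_nonneg_right (hlip _ _) (norm_nonneg _)
          _ = L * (1 - t) * ‖v‖ ^ 2 := by
              have h : (a + t • v) - b = -((1 - t) • v) := by rw [hv]; module
              rw [h, norm_neg, norm_smul]
              simp only [Real.norm_eq_abs, abs_of_nonneg (by linarith [ht.2] : (0:ℝ) ≤ 1 - t)]
              ring
      rw [inner_sub_left] at h1
      linarith
  have h10 := hmono (Set.left_mem_Icc.2 one_pos.le) (Set.right_mem_Icc.2 one_pos.le) one_pos.le
  simp only [hφ, zero_smul, add_zero, one_smul, zero_mul, sub_zero, sub_self] at h10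
  have hb : a + v = b := by rw [hv]; abel
  rw [hb] at h10
  nlinarith [h10]

lemma admm_edge_calc (μz : ℝ) (hμz : μz ≠ 0) (x1 x2 y1 y2 z z' : F)
    (hz' : z' = (1 / 2 : ℝ) • (x1 + x2 + μz⁻¹ • (y1 + y2))) :
    (⟪y1, x1 - z'⟫ + μz / 2 * ‖x1 - z'‖ ^ 2 - (⟪y1, x1 - z⟫ + μz / 2 * ‖x1 - z‖ ^ 2))
      + (⟪y2, x2 - z'⟫ + μz / 2 * ‖x2 - z'‖ ^ 2 - (⟪y2, x2 - z⟫ + μz / 2 * ‖x2 - z‖ ^ 2))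
      = -(μz * ‖z' - z‖ ^ 2) := by
  have hy : y1 + y2 = μz • ((2 : ℝ) • z' - (x1 + x2)) := by
    rw [hz']; rw [smul_sub, smul_smul, smul_smul]
    match_scalars <;> field_simp <;> ring
  have h1 : (⟪y1, x1 - z'⟫ - ⟪y1, x1 - z⟫) + (⟪y2, x2 - z'⟫ - ⟪y2, x2 - z⟫)
      = ⟪y1 + y2, z - z'⟫ := by
    simp only [inner_sub_right, inner_add_left]; ring
  have h2 : ⟪y1 + y2, z - z'⟫ = μz * ⟪(2 : ℝ) • z' - (x1 + x2), z - z'⟫ := by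
    rw [hy, real_inner_smul_left]
  have key : ⟪(2 : ℝ) • z' - (x1 + x2), z - z'⟫
      + (1 / 2) * (‖x1 - z'‖ ^ 2 - ‖x1 - z‖ ^ 2 + (‖x2 - z'‖ ^ 2 - ‖x2 - z‖ ^ 2))
      = -‖z' - z‖ ^ 2 := by
    simp only [norm_sub_sq_real, inner_sub_left, inner_add_left, inner_sub_right,
      real_inner_smul_left, real_inner_self_eq_norm_sq, real_inner_comm z' z,
      real_inner_comm z' x1, real_inner_comm z' x2,
      real_inner_comm z x1, real_inner_comm z x2]
    ring
  have key2 : μz * ⟪(2 : ℝ) • z' - (x1 + x2), z - z'⟫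
      + μz / 2 * (‖x1 - z'‖ ^ 2 - ‖x1 - z‖ ^ 2 + (‖x2 - z'‖ ^ 2 - ‖x2 - z‖ ^ 2))
      = -(μz * ‖z' - z‖ ^ 2) := by linear_combination μz * key
  linarith [h1, h2, key2]

lemma admm_quad_diff (a b z : F) :
    ‖a - z‖ ^ 2 - ‖b - z‖ ^ 2 = 2 * ⟪a - z, a - b⟫ - ‖a - b‖ ^ 2 := by
  simp only [norm_sub_sq_real, inner_sub_left, inner_sub_right, real_inner_self_eq_norm_sq,
    real_inner_comm z a, real_inner_comm z b, real_inner_comm b a]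
  ring

end Analysis

/-- One-round descent estimate of inexact ADMM (all agents active):
`ℒ(x^{t+1}, z^{t+1}, y^{t+1}) − ℒ(xᵗ, zᵗ, yᵗ)
 ≤ μ_y Σᵢ Σ_{j∈Nᵢ} ‖x_i^{t+1} − z_{ij}^{t+1}‖² − μ_z Σ_{{i,j}∈E} ‖z_{ij}^{t+1} − z_{ij}^t‖²
   + Σᵢ ‖ê_i^{t+1}‖² − (μ_z/2 − 1/4 − L/2) Σᵢ ‖x_i^{t+1} − x_i^t‖²`. -/
theorem stmt_10 (m d : ℕ) (G : SimpleGraph (Fin m)) [DecidableRel G.Adj]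
    (hdeg : ∀ i, 1 ≤ G.degree i)
    (f : Fin m → EuclideanSpace ℝ (Fin d) → ℝ)
    (hf : ∀ i, Differentiable ℝ (f i))
    (L : ℝ) (hL : 0 ≤ L)
    (hlip : ∀ i a b, ‖gradient (f i) a - gradient (f i) b‖ ≤ L * ‖a - b‖)
    (μz μy : ℝ) (hμz : 0 < μz) (hμy : 0 < μy)
    (xt xt1 : Fin m → EuclideanSpace ℝ (Fin d))
    (zt zt1 yt yt1 : Fin m → Fin m → EuclideanSpace ℝ (Fin d))
    (hztsym : ∀ i j, zt i j = zt j i)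
    (hzt1sym : ∀ i j, zt1 i j = zt1 j i)
    (hzupd : ∀ i j, G.Adj i j →
      zt1 i j = (1 / 2 : ℝ) • (xt1 i + xt1 j + μz⁻¹ • (yt i j + yt j i)))
    (hyupd : ∀ i j, G.Adj i j → yt1 i j = yt i j + μy • (xt1 i - zt1 i j))
    (Lag : (Fin m → EuclideanSpace ℝ (Fin d)) →
      (Fin m → Fin m → EuclideanSpace ℝ (Fin d)) →
      (Fin m → Fin m → EuclideanSpace ℝ (Fin d)) → ℝ)
    (hLag : ∀ x z y, Lag x z y
      = ∑ i, f i (x i)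
        + ∑ i, ∑ j ∈ G.neighborFinset i, ⟪y i j, x i - z i j⟫
        + (μz / 2) * ∑ i, ∑ j ∈ G.neighborFinset i, ‖x i - z i j‖ ^ 2)
    (ehat : Fin m → EuclideanSpace ℝ (Fin d))
    (hehat : ∀ i, ehat i
      = gradient (f i) (xt1 i)
        + ∑ j ∈ G.neighborFinset i, (yt i j + μz • (xt1 i - zt i j))) :
    Lag xt1 zt1 yt1 - Lag xt zt yt
      ≤ μy * ∑ i, ∑ j ∈ G.neighborFinset i, ‖xt1 i - zt1 i j‖ ^ 2
        - μz * ∑ e ∈ G.edgeFinset,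
            Sym2.lift ⟨fun i j => ‖zt1 i j - zt i j‖ ^ 2,
              fun i j => by simp only []; rw [hzt1sym i j, hztsym i j]⟩ e
        + ∑ i, ‖ehat i‖ ^ 2
        - (μz / 2 - 1 / 4 - L / 2) * ∑ i, ‖xt1 i - xt i‖ ^ 2 := by
  classical
  -- uniform difference formula
  have hLag' : ∀ x z y, Lag x z y
      = ∑ i, (f i (x i) + ∑ j ∈ G.neighborFinset i,
          (⟪y i j, x i - z i j⟫ + μz / 2 * ‖x i - z i j‖ ^ 2)) := by
    intro x z y
    rw [hLag]
    simp only [Finset.sum_add_distrib, Finset.mul_sum]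
    ring
  have hdiff : ∀ (x x' : Fin m → EuclideanSpace ℝ (Fin d))
      (z z' y y' : Fin m → Fin m → EuclideanSpace ℝ (Fin d)),
      Lag x z y - Lag x' z' y'
        = ∑ i, ((f i (x i) - f i (x' i))
            + ∑ j ∈ G.neighborFinset i,
              ((⟪y i j, x i - z i j⟫ + μz / 2 * ‖x i - z i j‖ ^ 2)
                - (⟪y' i j, x' i - z' i j⟫ + μz / 2 * ‖x' i - z' i j‖ ^ 2))) := by
    intro x x' z z' y y'
    rw [hLag' x z y, hLag' x' z' y', ← Finset.sum_sub_distrib]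
    refine Finset.sum_congr rfl fun i _ => ?_
    rw [Finset.sum_sub_distrib]
    ring
  -- Step A : dual update
  have hA : Lag xt1 zt1 yt1 - Lag xt1 zt1 yt
      = μy * ∑ i, ∑ j ∈ G.neighborFinset i, ‖xt1 i - zt1 i j‖ ^ 2 := by
    rw [hdiff, Finset.mul_sum]
    refine Finset.sum_congr rfl fun i _ => ?_
    rw [sub_self, zero_add, Finset.mul_sum]
    refine Finset.sum_congr rfl fun j hj => ?_
    have hadj := (SimpleGraph.mem_neighborFinset _ _ _).1 hj
    rw [hyupd i j hadj, inner_add_left, real_inner_smul_left, real_inner_self_eq_norm_sq]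
    ring
  -- Step B : primal z update
  have hB : Lag xt1 zt1 yt - Lag xt1 zt yt
      = -(μz * ∑ e ∈ G.edgeFinset,
          Sym2.lift ⟨fun i j => ‖zt1 i j - zt i j‖ ^ 2,
            fun i j => by simp only []; rw [hzt1sym i j, hztsym i j]⟩ e) := by
    rw [hdiff]
    have hsimp : ∀ i : Fin m, (f i (xt1 i) - f i (xt1 i))
        + ∑ j ∈ G.neighborFinset i,
          ((⟪yt i j, xt1 i - zt1 i j⟫ + μz / 2 * ‖xt1 i - zt1 i j‖ ^ 2)
            - (⟪yt i j, xt1 i - zt i j⟫ + μz / 2 * ‖xt1 i - zt i j‖ ^ 2))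
        = ∑ j ∈ G.neighborFinset i,
          ((⟪yt i j, xt1 i - zt1 i j⟫ + μz / 2 * ‖xt1 i - zt1 i j‖ ^ 2)
            - (⟪yt i j, xt1 i - zt i j⟫ + μz / 2 * ‖xt1 i - zt i j‖ ^ 2)) := by
      intro i; rw [sub_self, zero_add]
    rw [Finset.sum_congr rfl fun i _ => hsimp i]
    rw [admm_nbr_eq_edge, Finset.mul_sum, ← Finset.sum_neg_distrib]
    refine Finset.sum_congr rfl fun e he => ?_
    rw [SimpleGraph.mem_edgeFinset] at he
    induction e with
    | _ v w =>
      have hadj : G.Adj v w := (SimpleGraph.mem_edgeSet G).1 he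
      rw [Sym2.lift_mk, Sym2.lift_mk]
      simp only []
      rw [hzt1sym w v, hztsym w v]
      exact admm_edge_calc μz hμz.ne' (xt1 v) (xt1 w) (yt v w) (yt w v)
        (zt v w) (zt1 v w) (hzupd v w hadj)
  -- Step C : primal x update
  have hC : Lag xt1 zt yt - Lag xt zt yt
      ≤ ∑ i, ‖ehat i‖ ^ 2 - (μz / 2 - 1 / 4 - L / 2) * ∑ i, ‖xt1 i - xt i‖ ^ 2 := by
    rw [hdiff]
    have hbound : ∀ i : Fin m, (f i (xt1 i) - f i (xt i))
        + ∑ j ∈ G.neighborFinset i,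
          ((⟪yt i j, xt1 i - zt i j⟫ + μz / 2 * ‖xt1 i - zt i j‖ ^ 2)
            - (⟪yt i j, xt i - zt i j⟫ + μz / 2 * ‖xt i - zt i j‖ ^ 2))
        ≤ ‖ehat i‖ ^ 2 - (μz / 2 - 1 / 4 - L / 2) * ‖xt1 i - xt i‖ ^ 2 := by
      intro i
      have hpair : ∀ j ∈ G.neighborFinset i,
          (⟪yt i j, xt1 i - zt i j⟫ + μz / 2 * ‖xt1 i - zt i j‖ ^ 2)
            - (⟪yt i j, xt i - zt i j⟫ + μz / 2 * ‖xt i - zt i j‖ ^ 2)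
          = ⟪yt i j + μz • (xt1 i - zt i j), xt1 i - xt i⟫
            - μz / 2 * ‖xt1 i - xt i‖ ^ 2 := by
        intro j _
        have hq := admm_quad_diff (xt1 i) (xt i) (zt i j)
        simp only [inner_add_left, real_inner_smul_left, inner_sub_right]
        simp only [inner_sub_right] at hq
        linear_combination (μz / 2) * hq
      rw [Finset.sum_congr rfl hpair, Finset.sum_sub_distrib, Finset.sum_const, ← sum_inner,
        SimpleGraph.card_neighborFinset_eq_degree, nsmul_eq_mul]
      have hS : (∑ j ∈ G.neighborFinset i, (yt i j + μz • (xt1 i - zt i j)))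
          = ehat i - gradient (f i) (xt1 i) := by
        rw [hehat i]; abel
      rw [hS, inner_sub_left]
      have hdesc := admm_descent (f i) (hf i) L (hlip i) (xt i) (xt1 i)
      have hinner : ⟪ehat i, xt1 i - xt i⟫ ≤ ‖ehat i‖ * ‖xt1 i - xt i‖ :=
        real_inner_le_norm _ _
      have hdeg' : (1 : ℝ) ≤ (G.degree i : ℝ) := by exact_mod_cast hdeg i
      nlinarith [sq_nonneg (‖ehat i‖ - ‖xt1 i - xt i‖ / 2), sq_nonneg ‖xt1 i - xt i‖,
        mul_nonneg (mul_nonneg (sub_nonneg.2 hdeg') hμz.le) (sq_nonneg ‖xt1 i - xt i‖)]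
    calc ∑ i, ((f i (xt1 i) - f i (xt i))
        + ∑ j ∈ G.neighborFinset i,
          ((⟪yt i j, xt1 i - zt i j⟫ + μz / 2 * ‖xt1 i - zt i j‖ ^ 2)
            - (⟪yt i j, xt i - zt i j⟫ + μz / 2 * ‖xt i - zt i j‖ ^ 2)))
        ≤ ∑ i, (‖ehat i‖ ^ 2 - (μz / 2 - 1 / 4 - L / 2) * ‖xt1 i - xt i‖ ^ 2) :=
          Finset.sum_le_sum fun i _ => hbound i
      _ = ∑ i, ‖ehat i‖ ^ 2 - (μz / 2 - 1 / 4 - L / 2) * ∑ i, ‖xt1 i - xt i‖ ^ 2 := by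
          rw [Finset.sum_sub_distrib, Finset.mul_sum]
  linarith [hA, hB, hC]
end

section
/- Let G be a finite simple graph on vertex set {1,…,m} with maximum degree d_max, let each f_i : ℝ^d → ℝ be differentiable with L-Lipschitz gradient, and let μ_z > 0, μ_y > 0. Suppose y_{ij,i}^t = y_{ij,i}^{t−1} + μ_y(x_i^t − z_{ij}^t) for every ordered adjacent pair, and define ê_i^{t+1} := ∇f_i(x̂_i^{t+1}) + Σ_{j∈N_i}(y_{ij,i}^t + μ_z(x̂_i^{t+1} − z_{ij}^t)) and e_i^t := ∇f_i(x_i^t) + Σ_{j∈N_i}(y_{ij,i}^{t−1} + μ_z(x_i^t − z_{ij}^{t−1})), where z_{ij}^t = z_{ji}^t is one variable per undirected edge. Then μ_y² Σ_{i=1}^m ‖Σ_{j∈N_i}(x_i^t − z_{ij}^t)‖² ≤ 3 Σ_i ‖e_i^t‖² + 3 Σ_i ‖ê_i^{t+1}‖² + 9(d_max² μ_z² + L²) Σ_i ‖x_i^t − x̂_i^{t+1}‖² + 18 d_max μ_z² Σ_{{i,j}∈E} ‖z_{ij}^{t−1} − z_{ij}^t‖². -/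
open Finset

set_option maxHeartbeats 1000000

lemma sum_neighbors_eq (V : Type*) [Fintype V] [DecidableEq V] (G : SimpleGraph V)
    [DecidableRel G.Adj] (F : V → V → ℝ) (hF : ∀ i j, F i j = F j i) :
    ∑ i, ∑ j ∈ G.neighborFinset i, F i j
      = 2 * ∑ e ∈ G.edgeFinset, Sym2.lift ⟨F, hF⟩ e := by
  have way1 : ∑ d : G.Dart, F d.fst d.snd = ∑ i, ∑ j ∈ G.neighborFinset i, F i j := by
    have heq := Fintype.sum_equiv
      (⟨fun s => ⟨(s.1, s.2.1), s.2.2⟩, fun d => ⟨d.fst, d.snd, d.adj⟩,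
        fun s => rfl, fun d => rfl⟩ : (Σ v : V, G.neighborSet v) ≃ G.Dart)
      (fun s : Σ v : V, G.neighborSet v => F s.1 s.2.1)
      (fun d : G.Dart => F d.fst d.snd) (fun s => rfl)
    rw [← heq, ← Finset.univ_sigma_univ, Finset.sum_sigma]
    refine Finset.sum_congr rfl fun v _ => ?_
    rw [← Finset.sum_coe_sort (G.neighborFinset v) (fun j => F v j)]
    apply Fintype.sum_equiv (Equiv.subtypeEquivRight (fun j => (G.mem_neighborFinset v j).symm))
    intro j; rfl
  have way2 : ∑ d : G.Dart, F d.fst d.snd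
      = ∑ e ∈ G.edgeFinset, 2 * Sym2.lift ⟨F, hF⟩ e := by
    rw [← Finset.sum_fiberwise_of_maps_to (g := SimpleGraph.Dart.edge)
      (fun d _ => SimpleGraph.mem_edgeFinset.mpr d.edge_mem)]
    refine Finset.sum_congr rfl fun e he => ?_
    rw [SimpleGraph.mem_edgeFinset] at he
    induction e with
    | _ v w =>
      have hadj : G.Adj v w := he
      have hd : ∀ d : G.Dart, d ∈ Finset.univ.filter (fun d : G.Dart => d.edge = s(v, w)) ↔
          d = (⟨(v, w), hadj⟩ : G.Dart) ∨ d = (⟨(v, w), hadj⟩ : G.Dart).symm := by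
        intro d
        simp only [Finset.mem_filter, Finset.mem_univ, true_and]
        rw [show s(v, w) = (⟨(v, w), hadj⟩ : G.Dart).edge from rfl, SimpleGraph.dart_edge_eq_iff]
      rw [show Finset.univ.filter (fun d : G.Dart => d.edge = s(v, w))
          = {(⟨(v, w), hadj⟩ : G.Dart), (⟨(v, w), hadj⟩ : G.Dart).symm} from
        Finset.ext fun d => by rw [hd d]; simp]
      rw [Finset.sum_pair (⟨(v, w), hadj⟩ : G.Dart).symm_ne.symm]
      simp [Sym2.lift_mk, hF w v]
      ring
  rw [← way1, way2, Finset.mul_sum]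

/-- Bound on the aggregated primal residual:
`μ_y² Σᵢ ‖Σ_{j∈Nᵢ}(x_iᵗ − z_{ij}ᵗ)‖²
 ≤ 3 Σᵢ ‖e_iᵗ‖² + 3 Σᵢ ‖ê_i^{t+1}‖² + 9(d_max² μ_z² + L²) Σᵢ ‖x_iᵗ − x̂_i^{t+1}‖²
   + 18 d_max μ_z² Σ_{{i,j}∈E} ‖z_{ij}^{t−1} − z_{ij}ᵗ‖²`. -/
theorem stmt_12 (m d : ℕ) (G : SimpleGraph (Fin m)) [DecidableRel G.Adj]
    (f : Fin m → EuclideanSpace ℝ (Fin d) → ℝ)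
    (hf : ∀ i, Differentiable ℝ (f i))
    (L : ℝ) (hL : 0 ≤ L)
    (hlip : ∀ i a b, ‖gradient (f i) a - gradient (f i) b‖ ≤ L * ‖a - b‖)
    (μz μy : ℝ) (hμz : 0 < μz) (hμy : 0 < μy)
    (xt xhat1 : Fin m → EuclideanSpace ℝ (Fin d))
    (ztm1 zt ytm1 yt : Fin m → Fin m → EuclideanSpace ℝ (Fin d))
    (hztm1sym : ∀ i j, ztm1 i j = ztm1 j i)
    (hztsym : ∀ i j, zt i j = zt j i)
    (hyupd : ∀ i j, G.Adj i j → yt i j = ytm1 i j + μy • (xt i - zt i j))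
    (ehat1 et : Fin m → EuclideanSpace ℝ (Fin d))
    (hehat1 : ∀ i, ehat1 i
      = gradient (f i) (xhat1 i)
        + ∑ j ∈ G.neighborFinset i, (yt i j + μz • (xhat1 i - zt i j)))
    (het : ∀ i, et i
      = gradient (f i) (xt i)
        + ∑ j ∈ G.neighborFinset i, (ytm1 i j + μz • (xt i - ztm1 i j))) :
    μy ^ 2 * ∑ i, ‖∑ j ∈ G.neighborFinset i, (xt i - zt i j)‖ ^ 2
      ≤ 3 * ∑ i, ‖et i‖ ^ 2 + 3 * ∑ i, ‖ehat1 i‖ ^ 2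
        + 9 * ((G.maxDegree : ℝ) ^ 2 * μz ^ 2 + L ^ 2) * ∑ i, ‖xt i - xhat1 i‖ ^ 2
        + 18 * (G.maxDegree : ℝ) * μz ^ 2
            * ∑ e ∈ G.edgeFinset,
                Sym2.lift ⟨fun i j => ‖ztm1 i j - zt i j‖ ^ 2,
                  fun i j => by simp only []; rw [hztm1sym i j, hztsym i j]⟩ e := by
  classical
  set dm : ℝ := (G.maxDegree : ℝ) with hdm
  -- notation
  set A : Fin m → EuclideanSpace ℝ (Fin d) :=
    fun i => ∑ j ∈ G.neighborFinset i, (xt i - zt i j) with hA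
  set D : Fin m → EuclideanSpace ℝ (Fin d) :=
    fun i => ∑ j ∈ G.neighborFinset i, (zt i j - ztm1 i j) with hD
  set Z : Fin m → ℝ := fun i => ∑ j ∈ G.neighborFinset i, ‖ztm1 i j - zt i j‖ ^ 2 with hZ
  clear_value dm A D Z
  -- key identity
  have key : ∀ i, μy • A i
      = ehat1 i + (-(et i))
        + ((gradient (f i) (xt i) - gradient (f i) (xhat1 i))
            + ((G.degree i : ℝ) * μz) • (xt i - xhat1 i) + μz • D i) := by
    intro i
    have hS1 : ∑ j ∈ G.neighborFinset i, (yt i j + μz • (xhat1 i - zt i j))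
        = (∑ j ∈ G.neighborFinset i, yt i j)
          + μz • ∑ j ∈ G.neighborFinset i, (xhat1 i - zt i j) := by
      rw [Finset.sum_add_distrib, Finset.smul_sum]
    have hS2 : ∑ j ∈ G.neighborFinset i, (ytm1 i j + μz • (xt i - ztm1 i j))
        = (∑ j ∈ G.neighborFinset i, ytm1 i j)
          + μz • ∑ j ∈ G.neighborFinset i, (xt i - ztm1 i j) := by
      rw [Finset.sum_add_distrib, Finset.smul_sum]
    have h1 : (∑ j ∈ G.neighborFinset i, yt i j)
        = (∑ j ∈ G.neighborFinset i, ytm1 i j) + μy • A i := by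
      simp only [hA]
      rw [Finset.smul_sum, ← Finset.sum_add_distrib]
      exact Finset.sum_congr rfl fun j hj => hyupd i j ((G.mem_neighborFinset i j).mp hj)
    have hB : ∑ j ∈ G.neighborFinset i, (xhat1 i - zt i j)
        = A i + ((G.degree i : ℝ)) • (xhat1 i - xt i) := by
      have : ∀ j ∈ G.neighborFinset i, xhat1 i - zt i j
          = (xt i - zt i j) + (xhat1 i - xt i) := fun j _ => by abel
      simp only [hA]
      rw [Finset.sum_congr rfl this, Finset.sum_add_distrib, Finset.sum_const,
        SimpleGraph.card_neighborFinset_eq_degree, Nat.cast_smul_eq_nsmul]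
    have hC : ∑ j ∈ G.neighborFinset i, (xt i - ztm1 i j) = A i + D i := by
      simp only [hA, hD]
      rw [← Finset.sum_add_distrib]
      exact Finset.sum_congr rfl fun j _ => by abel
    have hE1 : ehat1 i = gradient (f i) (xhat1 i)
        + ((∑ j ∈ G.neighborFinset i, ytm1 i j) + μy • A i)
        + μz • (A i + ((G.degree i : ℝ)) • (xhat1 i - xt i)) := by
      rw [hehat1 i, hS1, h1, hB]; abel
    have hE0 : et i = gradient (f i) (xt i)
        + (∑ j ∈ G.neighborFinset i, ytm1 i j) + μz • (A i + D i) := by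
      rw [het i, hS2, hC, add_assoc]
    rw [hE1, hE0]
    match_scalars <;> ring
  -- pointwise norm bound
  have hpt : ∀ i, μy ^ 2 * ‖A i‖ ^ 2
      ≤ 3 * ‖et i‖ ^ 2 + 3 * ‖ehat1 i‖ ^ 2
        + 9 * (dm ^ 2 * μz ^ 2 + L ^ 2) * ‖xt i - xhat1 i‖ ^ 2
        + 9 * dm * μz ^ 2 * Z i := by
    intro i
    set c : EuclideanSpace ℝ (Fin d) :=
      (gradient (f i) (xt i) - gradient (f i) (xhat1 i))
        + ((G.degree i : ℝ) * μz) • (xt i - xhat1 i) + μz • D i with hc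
    clear_value c
    have hn : (G.degree i : ℝ) ≤ dm := by
      rw [hdm]; exact_mod_cast G.degree_le_maxDegree i
    have hn0 : (0 : ℝ) ≤ (G.degree i : ℝ) := Nat.cast_nonneg _
    have hsq : ‖μy • A i‖ ^ 2 = μy ^ 2 * ‖A i‖ ^ 2 := by
      rw [norm_smul, Real.norm_eq_abs, mul_pow, sq_abs]
    have htri : ‖μy • A i‖ ≤ ‖ehat1 i‖ + ‖et i‖ + ‖c‖ := by
      rw [key i, ← hc]
      calc ‖ehat1 i + (-(et i)) + c‖ ≤ ‖ehat1 i‖ + ‖-(et i)‖ + ‖c‖ := norm_add₃_le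
        _ = ‖ehat1 i‖ + ‖et i‖ + ‖c‖ := by rw [norm_neg]
    have hDZ : ‖D i‖ ^ 2 ≤ (G.degree i : ℝ) * Z i := by
      have h1 : ‖D i‖ ≤ ∑ j ∈ G.neighborFinset i, ‖zt i j - ztm1 i j‖ := by
        simp only [hD]; exact norm_sum_le _ _
      have h2 : (∑ j ∈ G.neighborFinset i, ‖zt i j - ztm1 i j‖) ^ 2
          ≤ (G.neighborFinset i).card * ∑ j ∈ G.neighborFinset i, ‖zt i j - ztm1 i j‖ ^ 2 :=
        sq_sum_le_card_mul_sum_sq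
      have h3 : (∑ j ∈ G.neighborFinset i, ‖zt i j - ztm1 i j‖ ^ 2) = Z i := by
        simp only [hZ]; exact Finset.sum_congr rfl fun j _ => by rw [norm_sub_rev]
      calc ‖D i‖ ^ 2 ≤ (∑ j ∈ G.neighborFinset i, ‖zt i j - ztm1 i j‖) ^ 2 :=
            pow_le_pow_left₀ (norm_nonneg _) h1 2
        _ ≤ (G.degree i : ℝ) * Z i := by
            rw [← h3, ← SimpleGraph.card_neighborFinset_eq_degree]; exact_mod_cast h2
    have hc_le : ‖c‖ ≤ L * ‖xt i - xhat1 i‖ + ((G.degree i : ℝ) * μz) * ‖xt i - xhat1 i‖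
        + μz * ‖D i‖ := by
      rw [hc]
      refine le_trans norm_add₃_le ?_
      gcongr
      · exact hlip i (xt i) (xhat1 i)
      · rw [norm_smul, Real.norm_eq_abs, abs_of_nonneg (by positivity)]
      · rw [norm_smul, Real.norm_eq_abs, abs_of_pos hμz]
    have hZ0 : 0 ≤ Z i := by
      simp only [hZ]; exact Finset.sum_nonneg fun j _ => by positivity
    have hD0 : (0:ℝ) ≤ ‖D i‖ := norm_nonneg _
    have hu0 : (0:ℝ) ≤ ‖xt i - xhat1 i‖ := norm_nonneg _
    have s1 : ‖μy • A i‖ ^ 2 ≤ (‖ehat1 i‖ + ‖et i‖ + ‖c‖) ^ 2 :=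
      pow_le_pow_left₀ (norm_nonneg _) htri 2
    have s2 : (‖ehat1 i‖ + ‖et i‖ + ‖c‖) ^ 2
        ≤ 3 * (‖ehat1 i‖ ^ 2 + ‖et i‖ ^ 2 + ‖c‖ ^ 2) := by
      nlinarith [sq_nonneg (‖ehat1 i‖ - ‖et i‖), sq_nonneg (‖ehat1 i‖ - ‖c‖),
        sq_nonneg (‖et i‖ - ‖c‖)]
    have s3 : ‖c‖ ^ 2 ≤ (L * ‖xt i - xhat1 i‖ + ((G.degree i : ℝ) * μz) * ‖xt i - xhat1 i‖
        + μz * ‖D i‖) ^ 2 := pow_le_pow_left₀ (norm_nonneg _) hc_le 2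
    have s4 : (L * ‖xt i - xhat1 i‖ + ((G.degree i : ℝ) * μz) * ‖xt i - xhat1 i‖
        + μz * ‖D i‖) ^ 2
        ≤ 3 * ((L * ‖xt i - xhat1 i‖) ^ 2 + (((G.degree i : ℝ) * μz) * ‖xt i - xhat1 i‖) ^ 2
          + (μz * ‖D i‖) ^ 2) := by
      nlinarith [sq_nonneg (L * ‖xt i - xhat1 i‖ - ((G.degree i : ℝ) * μz) * ‖xt i - xhat1 i‖),
        sq_nonneg (L * ‖xt i - xhat1 i‖ - μz * ‖D i‖),
        sq_nonneg (((G.degree i : ℝ) * μz) * ‖xt i - xhat1 i‖ - μz * ‖D i‖)]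
    have s5 : (((G.degree i : ℝ) * μz) * ‖xt i - xhat1 i‖) ^ 2
        ≤ (dm * μz * ‖xt i - xhat1 i‖) ^ 2 := by
      have : ((G.degree i : ℝ) * μz) * ‖xt i - xhat1 i‖ ≤ (dm * μz) * ‖xt i - xhat1 i‖ := by
        gcongr
      exact pow_le_pow_left₀ (by positivity) this 2
    have s6 : (μz * ‖D i‖) ^ 2 ≤ μz ^ 2 * (dm * Z i) := by
      have h7 : ‖D i‖ ^ 2 ≤ dm * Z i :=
        hDZ.trans (mul_le_mul_of_nonneg_right hn hZ0)
      calc (μz * ‖D i‖) ^ 2 = μz ^ 2 * ‖D i‖ ^ 2 := by ring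
        _ ≤ μz ^ 2 * (dm * Z i) := mul_le_mul_of_nonneg_left h7 (by positivity)
    rw [← hsq]
    nlinarith [s1, s2, s3, s4, s5, s6]
  -- assemble
  have hsum := Finset.sum_le_sum (fun i (_ : i ∈ (Finset.univ : Finset (Fin m))) => hpt i)
  have hedge : ∑ i, Z i = 2 * ∑ e ∈ G.edgeFinset,
      Sym2.lift ⟨fun i j => ‖ztm1 i j - zt i j‖ ^ 2,
        fun i j => by simp only []; rw [hztm1sym i j, hztsym i j]⟩ e := by
    simp only [hZ]
    exact sum_neighbors_eq (Fin m) G (fun i j => ‖ztm1 i j - zt i j‖ ^ 2)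
      (fun i j => by show ‖ztm1 i j - zt i j‖ ^ 2 = ‖ztm1 j i - zt j i‖ ^ 2; rw [hztm1sym i j, hztsym i j])
  calc μy ^ 2 * ∑ i, ‖∑ j ∈ G.neighborFinset i, (xt i - zt i j)‖ ^ 2
      = ∑ i, μy ^ 2 * ‖A i‖ ^ 2 := by simp only [hA]; rw [Finset.mul_sum]
    _ ≤ ∑ i, (3 * ‖et i‖ ^ 2 + 3 * ‖ehat1 i‖ ^ 2
        + 9 * (dm ^ 2 * μz ^ 2 + L ^ 2) * ‖xt i - xhat1 i‖ ^ 2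
        + 9 * dm * μz ^ 2 * Z i) := hsum
    _ = 3 * ∑ i, ‖et i‖ ^ 2 + 3 * ∑ i, ‖ehat1 i‖ ^ 2
        + 9 * (dm ^ 2 * μz ^ 2 + L ^ 2) * ∑ i, ‖xt i - xhat1 i‖ ^ 2
        + 9 * dm * μz ^ 2 * ∑ i, Z i := by
      rw [Finset.sum_add_distrib, Finset.sum_add_distrib, Finset.sum_add_distrib,
        ← Finset.mul_sum, ← Finset.mul_sum, ← Finset.mul_sum, ← Finset.mul_sum]
    _ ≤ _ := by
      rw [hedge, hdm]; exact le_of_eq (by ring)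
end

section
/- Let G be a finite simple graph on vertex set {1,…,m} with maximum degree d_max, let each f_i : ℝ^d → ℝ be differentiable with L-Lipschitz gradient, and μ_z > 0. Let x_i^t ∈ ℝ^d, set z_{ij}^t := (x_i^t + x_j^t)/2, let y_{ij,i}^t ∈ ℝ^d be given, φ_i^t := Σ_{j∈N_i} y_{ij,i}^t, and for arbitrary points x̂_i^{t+1} ∈ ℝ^d set ê_i^{t+1} := ∇f_i(x̂_i^{t+1}) + Σ_{j∈N_i}(y_{ij,i}^t + μ_z(x̂_i^{t+1} − z_{ij}^t)). Define V^t := Σ_i ‖∇f_i(x_i^t) + φ_i^t‖² + (1/4) Σ_i Σ_{j∈N_i} ‖x_i^t − x_j^t‖². Then V^t ≤ 4 Σ_i ‖ê_i^{t+1}‖² + (2L² + 8μ_z² d_max²) Σ_i ‖x̂_i^{t+1} − x_i^t‖² + (8μ_z² d_max + 1) Σ_i Σ_{j∈N_i} ‖x_i^t − z_{ij}^t‖². -/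
/-!
The gradient residual `∇fᵢ(xᵢ) + φᵢ` differs from the residual `êᵢ` at the virtual update by
three terms: the gradient increment `∇fᵢ(x̂ᵢ) − ∇fᵢ(xᵢ)` (at most `L‖x̂ᵢ − xᵢ‖`), the penalty
drift `μ_z |Nᵢ| (x̂ᵢ − xᵢ)`, and `μ_z Σⱼ (xᵢ − z_{ij})`, whose square is at most
`|Nᵢ| Σⱼ ‖xᵢ − z_{ij}‖²` by Cauchy–Schwarz. Squaring the four-term triangle inequality with the
weights `1/4, 1/2, 1/8, 1/8` bounds the first part of `V`; the consensus part of `V` equals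
`Σᵢ Σⱼ ‖xᵢ − z_{ij}‖²` since `xᵢ − z_{ij} = (xᵢ − xⱼ)/2`.
-/

open Finset

lemma add_four_sq_le (a b c e : ℝ) :
    (a + b + c + e) ^ 2 ≤ 4 * a ^ 2 + 2 * b ^ 2 + 8 * c ^ 2 + 8 * e ^ 2 := by
  nlinarith [sq_nonneg (b - (a + c + e)), sq_nonneg (a - (c + e)), sq_nonneg (c - e)]

section NormedSpace

variable {E : Type*} [SeminormedAddCommGroup E]

lemma norm_sub_sub_sub_sq_le (a b c e : E) :
    ‖a - b - c - e‖ ^ 2 ≤ 4 * ‖a‖ ^ 2 + 2 * ‖b‖ ^ 2 + 8 * ‖c‖ ^ 2 + 8 * ‖e‖ ^ 2 := by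
  have h : ‖a - b - c - e‖ ≤ ‖a‖ + ‖b‖ + ‖c‖ + ‖e‖ := by
    linarith [norm_sub_le (a - b - c) e, norm_sub_le (a - b) c, norm_sub_le a b]
  exact (pow_le_pow_left₀ (norm_nonneg _) h 2).trans (add_four_sq_le _ _ _ _)

lemma norm_sum_sq_le_card_mul {ι : Type*} (s : Finset ι) (v : ι → E) :
    ‖∑ j ∈ s, v j‖ ^ 2 ≤ #s * ∑ j ∈ s, ‖v j‖ ^ 2 :=
  (pow_le_pow_left₀ (norm_nonneg _) (norm_sum_le s v) 2).trans sq_sum_le_card_mul_sum_sq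

variable [NormedSpace ℝ E]

lemma norm_sub_half_smul_add_sq (x y : E) :
    ‖x - (1 / 2 : ℝ) • (x + y)‖ ^ 2 = ‖x - y‖ ^ 2 / 4 := by
  have h : x - (1 / 2 : ℝ) • (x + y) = (1 / 2 : ℝ) • (x - y) := by module
  rw [h, norm_smul, mul_pow, Real.norm_eq_abs, sq_abs]
  ring

/-- The bound for a single agent, with `x` its iterate, `xh` its virtual update, `g, g'` the
gradients of its cost at `x, xh`, and `e` the gradient of its augmented Lagrangian at `xh`. -/
lemma norm_residual_sq_le {ι : Type*} (s : Finset ι) (y z : ι → E) (x xh g g' e : E)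
    (L μ D : ℝ) (hg : ‖g' - g‖ ≤ L * ‖xh - x‖) (hs : (#s : ℝ) ≤ D)
    (he : e = g' + ∑ j ∈ s, (y j + μ • (xh - z j))) :
    ‖g + ∑ j ∈ s, y j‖ ^ 2 ≤ 4 * ‖e‖ ^ 2 + (2 * L ^ 2 + 8 * μ ^ 2 * D ^ 2) * ‖xh - x‖ ^ 2
      + 8 * μ ^ 2 * D * ∑ j ∈ s, ‖x - z j‖ ^ 2 := by
  have hdecomp : g + ∑ j ∈ s, y j
      = e - (g' - g) - (μ * #s) • (xh - x) - μ • ∑ j ∈ s, (x - z j) := by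
    have hshift : ∑ j ∈ s, (xh - z j) = (#s : ℝ) • (xh - x) + ∑ j ∈ s, (x - z j) := by
      rw [Nat.cast_smul_eq_nsmul, ← Finset.sum_const, ← Finset.sum_add_distrib]
      exact Finset.sum_congr rfl fun j _ ↦ by abel
    rw [he, Finset.sum_add_distrib, ← Finset.smul_sum, hshift, smul_add, smul_smul]
    abel
  have hgrad : ‖g' - g‖ ^ 2 ≤ L ^ 2 * ‖xh - x‖ ^ 2 := by
    rw [← mul_pow]; exact pow_le_pow_left₀ (norm_nonneg _) hg 2
  have hdrift : ‖(μ * #s) • (xh - x)‖ ^ 2 ≤ μ ^ 2 * D ^ 2 * ‖xh - x‖ ^ 2 := by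
    rw [norm_smul, mul_pow, Real.norm_eq_abs, sq_abs, mul_pow]
    gcongr
  have hcons : ‖μ • ∑ j ∈ s, (x - z j)‖ ^ 2 ≤ μ ^ 2 * (D * ∑ j ∈ s, ‖x - z j‖ ^ 2) := by
    rw [norm_smul, mul_pow, Real.norm_eq_abs, sq_abs]
    gcongr
    exact (norm_sum_sq_le_card_mul s _).trans (by gcongr)
  rw [hdecomp]
  refine (norm_sub_sub_sub_sq_le _ _ _ _).trans ?_
  linarith

end NormedSpace

theorem stmt_13_general (m d : ℕ) (G : SimpleGraph (Fin m)) [DecidableRel G.Adj]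
    (f : Fin m → EuclideanSpace ℝ (Fin d) → ℝ)
    (L : ℝ)
    (hlip : ∀ i a b, ‖gradient (f i) a - gradient (f i) b‖ ≤ L * ‖a - b‖)
    (μz : ℝ)
    (xt xhat1 : Fin m → EuclideanSpace ℝ (Fin d))
    (zt : Fin m → Fin m → EuclideanSpace ℝ (Fin d))
    (hzt : ∀ i j, zt i j = (1 / 2 : ℝ) • (xt i + xt j))
    (yt : Fin m → Fin m → EuclideanSpace ℝ (Fin d))
    (φt : Fin m → EuclideanSpace ℝ (Fin d))
    (hφt : ∀ i, φt i = ∑ j ∈ G.neighborFinset i, yt i j)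
    (ehat1 : Fin m → EuclideanSpace ℝ (Fin d))
    (hehat1 : ∀ i, ehat1 i
      = gradient (f i) (xhat1 i)
        + ∑ j ∈ G.neighborFinset i, (yt i j + μz • (xhat1 i - zt i j)))
    (V : ℝ)
    (hV : V = ∑ i, ‖gradient (f i) (xt i) + φt i‖ ^ 2
        + (1 / 4) * ∑ i, ∑ j ∈ G.neighborFinset i, ‖xt i - xt j‖ ^ 2) :
    V ≤ 4 * ∑ i, ‖ehat1 i‖ ^ 2
        + (2 * L ^ 2 + 8 * μz ^ 2 * (G.maxDegree : ℝ) ^ 2)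
            * ∑ i, ‖xhat1 i - xt i‖ ^ 2
        + (8 * μz ^ 2 * (G.maxDegree : ℝ) + 1)
            * ∑ i, ∑ j ∈ G.neighborFinset i, ‖xt i - zt i j‖ ^ 2 := by
  have hvertex : ∀ i, ‖gradient (f i) (xt i) + φt i‖ ^ 2
      ≤ 4 * ‖ehat1 i‖ ^ 2
        + (2 * L ^ 2 + 8 * μz ^ 2 * (G.maxDegree : ℝ) ^ 2) * ‖xhat1 i - xt i‖ ^ 2
        + 8 * μz ^ 2 * G.maxDegree * ∑ j ∈ G.neighborFinset i, ‖xt i - zt i j‖ ^ 2 := fun i ↦ by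
    rw [hφt]
    exact norm_residual_sq_le _ _ _ _ _ _ _ _ L μz _ (hlip i _ _)
      (by rw [SimpleGraph.card_neighborFinset_eq_degree]; exact_mod_cast G.degree_le_maxDegree i)
      (hehat1 i)
  have hconsensus : (1 / 4 : ℝ) * ∑ i, ∑ j ∈ G.neighborFinset i, ‖xt i - xt j‖ ^ 2
      = ∑ i, ∑ j ∈ G.neighborFinset i, ‖xt i - zt i j‖ ^ 2 := by
    simp only [hzt, norm_sub_half_smul_add_sq, ← Finset.sum_div]
    ring
  have hsum := Finset.sum_le_sum fun i (_ : i ∈ Finset.univ) ↦ hvertex i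
  simp only [Finset.sum_add_distrib, ← Finset.mul_sum] at hsum
  rw [hV, hconsensus]
  linarith

/-- Bound on the Lyapunov function:
`Vᵗ ≤ 4 Σᵢ ‖ê_i^{t+1}‖² + (2L² + 8μ_z² d_max²) Σᵢ ‖x̂_i^{t+1} − x_iᵗ‖²
   + (8μ_z² d_max + 1) Σᵢ Σ_{j∈Nᵢ} ‖x_iᵗ − z_{ij}ᵗ‖²`. -/
theorem stmt_13 (m d : ℕ) (G : SimpleGraph (Fin m)) [DecidableRel G.Adj]
    (f : Fin m → EuclideanSpace ℝ (Fin d) → ℝ)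
    (hf : ∀ i, Differentiable ℝ (f i))
    (L : ℝ) (hL : 0 ≤ L)
    (hlip : ∀ i a b, ‖gradient (f i) a - gradient (f i) b‖ ≤ L * ‖a - b‖)
    (μz : ℝ) (hμz : 0 < μz)
    (xt xhat1 : Fin m → EuclideanSpace ℝ (Fin d))
    (zt : Fin m → Fin m → EuclideanSpace ℝ (Fin d))
    (hzt : ∀ i j, zt i j = (1 / 2 : ℝ) • (xt i + xt j))
    (yt : Fin m → Fin m → EuclideanSpace ℝ (Fin d))
    (φt : Fin m → EuclideanSpace ℝ (Fin d))
    (hφt : ∀ i, φt i = ∑ j ∈ G.neighborFinset i, yt i j)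
    (ehat1 : Fin m → EuclideanSpace ℝ (Fin d))
    (hehat1 : ∀ i, ehat1 i
      = gradient (f i) (xhat1 i)
        + ∑ j ∈ G.neighborFinset i, (yt i j + μz • (xhat1 i - zt i j)))
    (V : ℝ)
    (hV : V = ∑ i, ‖gradient (f i) (xt i) + φt i‖ ^ 2
        + (1 / 4) * ∑ i, ∑ j ∈ G.neighborFinset i, ‖xt i - xt j‖ ^ 2) :
    V ≤ 4 * ∑ i, ‖ehat1 i‖ ^ 2
        + (2 * L ^ 2 + 8 * μz ^ 2 * (G.maxDegree : ℝ) ^ 2)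
            * ∑ i, ‖xhat1 i - xt i‖ ^ 2
        + (8 * μz ^ 2 * (G.maxDegree : ℝ) + 1)
            * ∑ i, ∑ j ∈ G.neighborFinset i, ‖xt i - zt i j‖ ^ 2 :=
  stmt_13_general m d G f L hlip μz xt xhat1 zt hzt yt φt hφt ehat1 hehat1 V hV
end

section
/- Let G be a finite simple graph on vertex set {1,…,m}, f_1,…,f_m : ℝ^d → ℝ with Σ_i f_i(u_i) ≥ F* for all u_1,…,u_m ∈ ℝ^d (some F* ∈ ℝ), let μ_z ≥ 0, μ_y > 0, and let ℒ denote the augmented Lagrangian. Suppose for every t ≥ 1 the dual update y_{ij,i}^t = y_{ij,i}^{t−1} + μ_y(x_i^t − z_{ij}^t) holds for every ordered adjacent pair. Then for every t ≥ 1: ℒ(x^t, z^t, y^t) − F* ≥ (1/(2μ_y)) (‖y^t‖² − ‖y^{t−1}‖²), where ‖y^t‖² := Σ_i Σ_{j∈N_i} ‖y_{ij,i}^t‖²; consequently, for every T ≥ 1, Σ_{t=1}^T (ℒ(x^t, z^t, y^t) − F*) ≥ −(1/(2μ_y)) ‖y^0‖². -/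
/-!
Write `‖y‖²` for the sum of `‖y_{ij}‖²` over ordered adjacent pairs. If `yᵗ = y^{t-1} + μ_y r`
then `‖y^{t-1}‖² = ‖yᵗ - μ_y r‖² ≤ ‖yᵗ‖² - 2μ_y⟪yᵗ, r⟫`, so the multiplier term of
`ℒ(xᵗ, zᵗ, yᵗ)` is at least `(‖yᵗ‖² - ‖y^{t-1}‖²) / (2μ_y)`; the `f`-term is at least `F*` and the
penalty term is nonnegative. Summing over `t` telescopes, and `‖y^T‖² ≥ 0`.
-/

open Finset RealInnerProductSpace

lemma one_div_two_mul_mul_norm_sq_sub_le_inner {E : Type*} [NormedAddCommGroup E]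
    [InnerProductSpace ℝ E] {μ : ℝ} (hμ : 0 < μ) {a b v : E} (h : a = b + μ • v) :
    (1 / (2 * μ)) * (‖a‖ ^ 2 - ‖b‖ ^ 2) ≤ ⟪a, v⟫ := by
  have hb : b = a - μ • v := eq_sub_of_add_eq h.symm
  have expand : ‖a‖ ^ 2 - ‖b‖ ^ 2 = 2 * μ * ⟪a, v⟫ - μ ^ 2 * ‖v‖ ^ 2 := by
    rw [hb, norm_sub_sq_real, real_inner_smul_right, norm_smul, mul_pow, Real.norm_eq_abs,
      sq_abs]
    ring
  have scaled : (1 / (2 * μ)) * (2 * μ * ⟪a, v⟫ - μ ^ 2 * ‖v‖ ^ 2)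
      = ⟪a, v⟫ - μ / 2 * ‖v‖ ^ 2 := by
    field_simp
  rw [expand, scaled]
  linarith [show 0 ≤ μ / 2 * ‖v‖ ^ 2 by positivity]

lemma neighbor_sum_norm_sq_sub_le_sum_inner {V E : Type*} [Fintype V] [NormedAddCommGroup E]
    [InnerProductSpace ℝ E] (G : SimpleGraph V) [DecidableRel G.Adj] {μ : ℝ} (hμ : 0 < μ)
    {y y' r : V → V → E} (h : ∀ i j, G.Adj i j → y' i j = y i j + μ • r i j) :
    (1 / (2 * μ)) * (∑ i, ∑ j ∈ G.neighborFinset i, ‖y' i j‖ ^ 2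
        - ∑ i, ∑ j ∈ G.neighborFinset i, ‖y i j‖ ^ 2)
      ≤ ∑ i, ∑ j ∈ G.neighborFinset i, ⟪y' i j, r i j⟫ := by
  simp only [← sum_sub_distrib, mul_sum]
  gcongr with i _ j hj
  exact one_div_two_mul_mul_norm_sq_sub_le_inner hμ (h i j ((G.mem_neighborFinset i j).mp hj))

lemma sum_Icc_sub_pred (g : ℕ → ℝ) (T : ℕ) :
    ∑ t ∈ Icc 1 T, (g t - g (t - 1)) = g T - g 0 := by
  induction T with
  | zero => simp
  | succ n ih =>
    rw [sum_Icc_succ_top (by omega), ih, Nat.add_sub_cancel]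
    ring

lemma neg_mul_le_sum_Icc_of_le_mul_sub_pred {a g : ℕ → ℝ} {c : ℝ} (hc : 0 ≤ c)
    (ha : ∀ t, 1 ≤ t → c * (g t - g (t - 1)) ≤ a t) {T : ℕ} (hgT : 0 ≤ g T) :
    -c * g 0 ≤ ∑ t ∈ Icc 1 T, a t :=
  calc -c * g 0 ≤ c * (g T - g 0) := by nlinarith
    _ = ∑ t ∈ Icc 1 T, c * (g t - g (t - 1)) := by rw [← mul_sum, sum_Icc_sub_pred]
    _ ≤ ∑ t ∈ Icc 1 T, a t := sum_le_sum fun t ht => ha t (mem_Icc.mp ht).1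

/-- Lower bound for the augmented Lagrangian along the dual ascent iterates:
for every `t ≥ 1`, `ℒ(xᵗ, zᵗ, yᵗ) − F* ≥ (1/(2μ_y))(‖yᵗ‖² − ‖y^{t−1}‖²)`, and
consequently `Σ_{t=1}^T (ℒ(xᵗ, zᵗ, yᵗ) − F*) ≥ −(1/(2μ_y))‖y⁰‖²`. -/
theorem stmt_14 (m d : ℕ) (G : SimpleGraph (Fin m)) [DecidableRel G.Adj]
    (f : Fin m → EuclideanSpace ℝ (Fin d) → ℝ)
    (Fstar : ℝ) (hFstar : ∀ u : Fin m → EuclideanSpace ℝ (Fin d), Fstar ≤ ∑ i, f i (u i))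
    (μz μy : ℝ) (hμz : 0 ≤ μz) (hμy : 0 < μy)
    (x : ℕ → Fin m → EuclideanSpace ℝ (Fin d))
    (z y : ℕ → Fin m → Fin m → EuclideanSpace ℝ (Fin d))
    (hyupd : ∀ t, 1 ≤ t → ∀ i j, G.Adj i j →
      y t i j = y (t - 1) i j + μy • (x t i - z t i j))
    (Lag : (Fin m → EuclideanSpace ℝ (Fin d)) →
      (Fin m → Fin m → EuclideanSpace ℝ (Fin d)) →
      (Fin m → Fin m → EuclideanSpace ℝ (Fin d)) → ℝ)
    (hLag : ∀ x' z' y', Lag x' z' y'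
      = ∑ i, f i (x' i)
        + ∑ i, ∑ j ∈ G.neighborFinset i, ⟪y' i j, x' i - z' i j⟫
        + (μz / 2) * ∑ i, ∑ j ∈ G.neighborFinset i, ‖x' i - z' i j‖ ^ 2) :
    (∀ t, 1 ≤ t →
      (1 / (2 * μy)) * ((∑ i, ∑ j ∈ G.neighborFinset i, ‖y t i j‖ ^ 2)
          - ∑ i, ∑ j ∈ G.neighborFinset i, ‖y (t - 1) i j‖ ^ 2)
        ≤ Lag (x t) (z t) (y t) - Fstar)
    ∧ (∀ T, 1 ≤ T →
      -(1 / (2 * μy)) * ∑ i, ∑ j ∈ G.neighborFinset i, ‖y 0 i j‖ ^ 2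
        ≤ ∑ t ∈ Finset.Icc 1 T, (Lag (x t) (z t) (y t) - Fstar)) := by
  have step : ∀ t, 1 ≤ t →
      (1 / (2 * μy)) * ((∑ i, ∑ j ∈ G.neighborFinset i, ‖y t i j‖ ^ 2)
          - ∑ i, ∑ j ∈ G.neighborFinset i, ‖y (t - 1) i j‖ ^ 2)
        ≤ Lag (x t) (z t) (y t) - Fstar := by
    intro t ht
    have multiplier := neighbor_sum_norm_sq_sub_le_sum_inner G hμy (hyupd t ht)
    have penalty : 0 ≤ (μz / 2) * ∑ i, ∑ j ∈ G.neighborFinset i, ‖x t i - z t i j‖ ^ 2 := by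
      positivity
    rw [hLag]
    linarith [hFstar (x t)]
  exact ⟨step, fun T _ => neg_mul_le_sum_Icc_of_le_mul_sub_pred (by positivity) step
    (by positivity)⟩
end
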